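/- The rugosity quantifier R(ρ) = -ln⟨f₁|ρ|f₁⟩ fails to distinguish the families σ_α and τ_α: R(σ_α) = R(τ_α) = -ln((1+α)/4) for all α ∈ [0,1]. -/

import Mathlib

open Matrix BigOperators Finset ComplexOrder

noncomputable section

abbrev Mat (d : ℕ) := Matrix (Fin d) (Fin d) ℂ

def IsDensity {d : ℕ} (ρ : Mat d) : Prop := ρ.PosSemidef ∧ ρ.trace = 1

def outer {d : ℕ} (ψ : Fin d → ℂ) : Mat d := Matrix.vecMulVec ψ (star ψ)

def f1vec (d : ℕ) : Fin d → ℂ := fun _ => ((Real.sqrt d)⁻¹ : ℝ)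

def f1 (d : ℕ) : Mat d := outer (f1vec d)

noncomputable def traceNorm {d : ℕ} (A : Mat d) : ℝ :=
  ((Matrix.posSemidef_conjTranspose_mul_self A).1.eigenvectorUnitary.1 *
    Matrix.diagonal ((fun x : ℝ => (x : ℂ)) ∘ Real.sqrt ∘ (Matrix.posSemidef_conjTranspose_mul_self A).1.eigenvalues) *
    (star (Matrix.posSemidef_conjTranspose_mul_self A).1.eigenvectorUnitary : Mat d)).trace.re

noncomputable def Ttr {d : ℕ} (ρ : Mat d) : ℝ := (1/2) * traceNorm (ρ - f1 d)

noncomputable def fidF1 {d : ℕ} (ρ : Mat d) : ℝ := (star (f1vec d) ⬝ᵥ (ρ *ᵥ f1vec d)).re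

noncomputable def TF {d : ℕ} (ρ : Mat d) : ℝ := 1 - fidF1 ρ

noncomputable def TB {d : ℕ} (ρ : Mat d) : ℝ := 2 * (1 - Real.sqrt (fidF1 ρ))

noncomputable def sigmaA (α : ℝ) : Mat 4 :=
  Matrix.of fun i j => if i = j then (1/4 : ℂ)
    else if (i : ℕ) + (j : ℕ) = 3 then (α : ℂ)/4 else 0

noncomputable def tauA (α : ℝ) : Mat 4 :=
  Matrix.of fun i j =>
    if i = 0 ∧ j = 0 then (1/2 : ℂ) else if i = 3 ∧ j = 3 then (1/2 : ℂ)
    else if (i = 0 ∧ j = 3) ∨ (i = 3 ∧ j = 0) then (α : ℂ)/2 else 0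

noncomputable def rugosity {d : ℕ} (ρ : Mat d) : ℝ := -Real.log (fidF1 ρ)

/- Since `f₁` is the uniform superposition, `⟨f₁|ρ|f₁⟩` is the sum of all entries of `ρ` divided
by `d`, and the entries of `σ_α` and of `τ_α` both sum to `1 + α`. -/

theorem fidF1_eq_sum_entries_div {d : ℕ} (ρ : Mat d) :
    fidF1 ρ = (∑ i, ∑ j, ρ i j).re / d := by
  have hc : ((Real.sqrt d)⁻¹ : ℝ) ^ 2 = (d : ℝ)⁻¹ := by
    rw [inv_pow, Real.sq_sqrt d.cast_nonneg]
  simp only [fidF1, f1vec, dotProduct, mulVec, Pi.star_apply, Complex.star_def,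
    Complex.conj_ofReal, ← Finset.mul_sum, ← Finset.sum_mul]
  rw [show ∀ z : ℂ, ∀ c : ℝ, (c : ℂ) * (z * c) = ((c ^ 2 : ℝ) : ℂ) * z by
    intro z c; push_cast; ring, hc, Complex.re_ofReal_mul, div_eq_inv_mul]

theorem sum_entries_sigmaA (α : ℝ) : ∑ i, ∑ j, sigmaA α i j = 1 + α := by
  simp [sigmaA, Fin.sum_univ_four]
  ring

theorem sum_entries_tauA (α : ℝ) : ∑ i, ∑ j, tauA α i j = 1 + α := by
  simp [tauA, Fin.sum_univ_four]
  ring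

theorem stmt15_general (α : ℝ) :
    rugosity (sigmaA α) = -Real.log ((1 + α) / 4) ∧
    rugosity (tauA α) = -Real.log ((1 + α) / 4) := by
  simp only [rugosity, fidF1_eq_sum_entries_div, sum_entries_sigmaA, sum_entries_tauA]
  norm_num

theorem stmt15 (α : ℝ) (h0 : 0 ≤ α) (h1 : α ≤ 1) :
    rugosity (sigmaA α) = -Real.log ((1 + α) / 4) ∧
    rugosity (tauA α) = -Real.log ((1 + α) / 4) :=
  stmt15_general α
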